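/- Fix m ≥ 1. For every 1 ≤ i ≤ n, every 1 ≤ k, and every capped count vector H : G → ℕ with H u ≤ m for all u, the counting recurrence holds: N_m(i,k,H) = N_m(i−1,k,H) + Σ_{F} N_m(i−1,k−1,F), where the sum ranges over all F : G → ℕ with F u ≤ m for all u such that, for every member u, H u = min(m, F u + (1 if u ∈ S i else 0)). -/

import Mathlib

/-!
Split the `k`-subsets `P` of `[i]` according to whether they contain the last item `a`.
Those that do are `insert a Q` for a `(k-1)`-subset `Q` of `[i-1]`, and since
`min m (min m x + s) = min m (x + s)`, the capped profile of `insert a Q` depends only on the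
capped profile `F` of `Q`; grouping the `Q` by `F` gives the sum.
-/

/-- The finset of the first `i` items among `Fin n`, i.e. `{0, …, i−1}`. -/
def firstItems (n i : ℕ) : Finset (Fin n) :=
  Finset.univ.filter (fun j => (j : ℕ) < i)

/-- `Nm n S m i k H` : the number of packages `P ⊆ [i]` with `card P = k` such
that for every member `u`, `H u` is the number of items of `P` satisfying `u`,
capped at `m`. -/
def Nm (n : ℕ) {G : Type} [Fintype G] [DecidableEq G] (S : Fin n → Finset G)
    (m i k : ℕ) (H : G → ℕ) : ℕ :=
  ((firstItems n i).powerset.filter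
    (fun P => P.card = k ∧
      ∀ u : G, H u = min m ((P.filter (fun j => u ∈ S j)).card))).card

open Finset

theorem Finset.card_filter_powersetCard_succ_insert {ι : Type*} [DecidableEq ι] {a : ι}
    {T : Finset ι} (ha : a ∉ T) (k : ℕ) (q : Finset ι → Prop) [DecidablePred q] :
    #{P ∈ (insert a T).powersetCard (k + 1) | q P} =
      #{P ∈ T.powersetCard (k + 1) | q P} + #{Q ∈ T.powersetCard k | q (insert a Q)} := by
  have hinj : Set.InjOn (insert a) (T.powersetCard k : Set (Finset ι)) :=
    fun Q₁ h₁ Q₂ h₂ h ↦ by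
      rw [mem_coe, mem_powersetCard] at h₁ h₂
      rw [← erase_insert (fun h ↦ ha (h₁.1 h)), h, erase_insert (fun h ↦ ha (h₂.1 h))]
  rw [powersetCard_succ_insert ha, filter_union, card_union_of_disjoint, filter_image,
    card_image_of_injOn (hinj.mono (coe_subset.2 (filter_subset _ _)))]
  refine disjoint_filter_filter (disjoint_left.2 fun P hP hP' ↦ ?_)
  obtain ⟨Q, hQ, rfl⟩ := mem_image.1 hP'
  exact ha ((mem_powersetCard.1 hP).1 (mem_insert_self a Q))

section CappedProfile

variable {ι G : Type*} [DecidableEq G] (S : ι → Finset G) (m : ℕ)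

def cappedProfile (P : Finset ι) (u : G) : ℕ := min m #{j ∈ P | u ∈ S j}

def addCapped (a : ι) (F : G → ℕ) (u : G) : ℕ := min m (F u + if u ∈ S a then 1 else 0)

variable {S m}

theorem cappedProfile_insert [DecidableEq ι] {a : ι} {Q : Finset ι} (ha : a ∉ Q) :
    cappedProfile S m (insert a Q) = addCapped S m a (cappedProfile S m Q) := by
  funext u
  simp only [cappedProfile, addCapped, filter_insert]
  split_ifs
  · rw [card_insert_of_notMem fun h ↦ ha (mem_filter.1 h).1]
    omega
  · rw [add_zero, min_eq_right (min_le_left _ _)]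

theorem card_addCapped_cappedProfile_eq [Fintype G] (a : ι) (X : Finset (Finset ι))
    (H : G → ℕ) :
    #{Q ∈ X | addCapped S m a (cappedProfile S m Q) = H} =
      ∑ F ∈ {F ∈ Icc 0 (fun _ ↦ m) | addCapped S m a F = H},
        #{Q ∈ X | cappedProfile S m Q = F} := by
  have hmaps : Set.MapsTo (cappedProfile S m)
      ↑({Q ∈ X | addCapped S m a (cappedProfile S m Q) = H} : Finset _)
      ↑({F ∈ Icc 0 (fun _ ↦ m) | addCapped S m a F = H} : Finset (G → ℕ)) :=
    fun Q hQ ↦ by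
      rw [mem_coe, mem_filter] at hQ ⊢
      exact ⟨mem_Icc.2 ⟨fun _ ↦ Nat.zero_le _, fun _ ↦ min_le_left _ _⟩, hQ.2⟩
  rw [card_eq_sum_card_fiberwise hmaps]
  refine sum_congr rfl fun F hF ↦ ?_
  rw [filter_filter]
  refine congrArg card (filter_congr fun Q _ ↦ ⟨And.right, fun hQ ↦ ⟨?_, hQ⟩⟩)
  rw [hQ]
  exact (mem_filter.1 hF).2

theorem card_cappedProfile_powersetCard_succ_insert [Fintype G] [DecidableEq ι] {a : ι}
    {T : Finset ι} (ha : a ∉ T) (k : ℕ) (H : G → ℕ) :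
    #{P ∈ (insert a T).powersetCard (k + 1) | cappedProfile S m P = H} =
      #{P ∈ T.powersetCard (k + 1) | cappedProfile S m P = H} +
        ∑ F ∈ {F ∈ Icc 0 (fun _ ↦ m) | addCapped S m a F = H},
          #{Q ∈ T.powersetCard k | cappedProfile S m Q = F} := by
  rw [card_filter_powersetCard_succ_insert ha, ← card_addCapped_cappedProfile_eq]
  congr 2
  refine filter_congr fun Q hQ ↦ ?_
  rw [cappedProfile_insert fun h ↦ ha ((mem_powersetCard.1 hQ).1 h)]

end CappedProfile

theorem Nm_eq_card (n : ℕ) {G : Type} [Fintype G] [DecidableEq G] (S : Fin n → Finset G)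
    (m i k : ℕ) (H : G → ℕ) :
    Nm n S m i k H = #{P ∈ (firstItems n i).powersetCard k | cappedProfile S m P = H} := by
  rw [Nm, powersetCard_eq_filter, filter_filter]
  simp only [funext_iff, cappedProfile, eq_comm]

theorem firstItems_succ {n j : ℕ} (hj : j < n) :
    firstItems n (j + 1) = insert ⟨j, hj⟩ (firstItems n j) := by
  ext x
  simp only [firstItems, mem_filter, mem_univ, true_and, mem_insert, Fin.ext_iff]
  omega

theorem notMem_firstItems_self {n j : ℕ} (hj : j < n) : ⟨j, hj⟩ ∉ firstItems n j := by
  simp [firstItems]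

theorem stmt_13 (n m : ℕ) (G : Type) [Fintype G] [DecidableEq G]
    (S : Fin n → Finset G)
    (i k : ℕ) (h1 : 1 ≤ i) (h2 : i ≤ n) (hk : 1 ≤ k)
    (H : G → ℕ) :
    Nm n S m i k H =
      Nm n S m (i - 1) k H +
        ∑ᶠ F ∈ {F : G → ℕ | (∀ u, F u ≤ m) ∧
            ∀ u : G, H u = min m (F u + if u ∈ S ⟨i - 1, by omega⟩ then 1 else 0)},
          Nm n S m (i - 1) (k - 1) F := by
  obtain ⟨j, rfl⟩ : ∃ j, i = j + 1 := ⟨i - 1, by omega⟩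
  obtain ⟨l, rfl⟩ : ∃ l, k = l + 1 := ⟨k - 1, by omega⟩
  have hj : j < n := h2
  have hprofiles : {F : G → ℕ | (∀ u, F u ≤ m) ∧
      ∀ u : G, H u = min m (F u + if u ∈ S ⟨j + 1 - 1, by omega⟩ then 1 else 0)} =
      ↑({F ∈ Icc 0 (fun _ ↦ m) | addCapped S m ⟨j, hj⟩ F = H} : Finset (G → ℕ)) := by
    ext F
    simp [addCapped, funext_iff, Pi.le_def, eq_comm]
  rw [hprofiles, finsum_mem_coe_finset]
  simp only [Nat.add_sub_cancel, Nm_eq_card]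
  rw [firstItems_succ hj, card_cappedProfile_powersetCard_succ_insert (notMem_firstItems_self hj)]
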